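/- Let η = diag(1,−1,…,−1) be the (n+1)×(n+1) Minkowski matrix (indices 0,…,n) and let g = Aᵀ η A for some invertible real (n+1)×(n+1) matrix A, so g is a symmetric invertible matrix of Lorentzian signature (1,n). Set G = g⁻¹ and assume G₀₀ > 0. Suppose ξ ∈ ℝ^{n+1} satisfies ξᵀ G ξ = 0 and (G ξ)₀ < 0 (i.e. Σ_{j=0}^n G₀ⱼ ξⱼ < 0, the 'smaller-root' condition). Then for every ẋ ∈ ℝ^{n+1} with ẋᵀ g ẋ > 0 and ẋ₀ > 0 one has Σ_{j=0}^n ξⱼ ẋⱼ ≤ 0. -/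

import Mathlib

/-!
Raising the index with `G = g⁻¹` turns the covectors `ξ` and `e₀ = dx₀` into the vectors `Gξ`
and `Ge₀`, and each pairing `ξ(ẋ)` into `g(Gξ, ẋ)`; applying `A` makes `g` the Minkowski form.
There `Gξ` is null, `Ge₀` is causal (`G₀₀ > 0`) and `ẋ` is timelike. For causal `x, y` a nonzero
`⟪x, y⟫` has the sign of `x₀ y₀` (reverse Cauchy–Schwarz), so `⟪Ge₀, Gξ⟫ < 0 < ⟪Ge₀, ẋ⟫ = ẋ₀`
puts `Gξ` and `ẋ` in opposite halves of the causal cone, whence `⟪Gξ, ẋ⟫ ≤ 0`.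
-/

open Matrix

def minkowskiInner {n : ℕ} (x y : Fin (n + 1) → ℝ) : ℝ :=
  x 0 * y 0 - ∑ i : Fin n, x i.succ * y i.succ

section Minkowski

variable {n : ℕ}

theorem dotProduct_minkowski_mulVec (x y : Fin (n + 1) → ℝ) :
    x ⬝ᵥ (diagonal (fun i : Fin (n + 1) => if i = 0 then (1 : ℝ) else -1) *ᵥ y) =
      minkowskiInner x y := by
  simp [dotProduct, mulVec_diagonal, Fin.sum_univ_succ, minkowskiInner, Fin.succ_ne_zero,
    Finset.sum_neg_distrib, sub_eq_add_neg]

theorem sq_sum_succ_mul_le_of_causal {x y : Fin (n + 1) → ℝ}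
    (hx : 0 ≤ minkowskiInner x x) (hy : 0 ≤ minkowskiInner y y) :
    (∑ i : Fin n, x i.succ * y i.succ) ^ 2 ≤ (x 0 * y 0) ^ 2 := by
  simp only [minkowskiInner, ← sq] at hx hy
  calc _ ≤ (∑ i : Fin n, x i.succ ^ 2) * ∑ i : Fin n, y i.succ ^ 2 :=
        Finset.sum_mul_sq_le_sq_mul_sq _ _ _
    _ ≤ x 0 ^ 2 * y 0 ^ 2 := by gcongr <;> linarith
    _ = _ := by ring

theorem mul_minkowskiInner_pos_of_causal {x y : Fin (n + 1) → ℝ}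
    (hx : 0 ≤ minkowskiInner x x) (hy : 0 ≤ minkowskiInner y y) (hxy : minkowskiInner x y ≠ 0) :
    0 < x 0 * y 0 * minkowskiInner x y := by
  have hsq := sq_sum_succ_mul_le_of_causal hx hy
  unfold minkowskiInner at hxy ⊢
  set c := x 0 * y 0
  set s := ∑ i : Fin n, x i.succ * y i.succ
  -- `c (c - s) = ((c - s)² + (c² - s²)) / 2`
  have : 0 < (c - s) ^ 2 := by positivity
  nlinarith

theorem minkowskiInner_nonpos_of_causal {x y z : Fin (n + 1) → ℝ}
    (hx : 0 ≤ minkowskiInner x x) (hy : 0 ≤ minkowskiInner y y) (hz : 0 ≤ minkowskiInner z z)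
    (hxy : minkowskiInner x y < 0) (hxz : 0 < minkowskiInner x z) :
    minkowskiInner y z ≤ 0 := by
  have hxy₀ : x 0 * y 0 < 0 := by
    nlinarith [mul_minkowskiInner_pos_of_causal hx hy hxy.ne]
  have hxz₀ : 0 < x 0 * z 0 := by
    nlinarith [mul_minkowskiInner_pos_of_causal hx hz hxz.ne']
  have hyz₀ : y 0 * z 0 < 0 := by
    nlinarith [mul_neg_of_neg_of_pos hxy₀ hxz₀, sq_nonneg (x 0)]
  by_contra! hyz
  nlinarith [mul_minkowskiInner_pos_of_causal hy hz hyz.ne']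

end Minkowski

theorem dotProduct_transpose_mul_mul_mulVec {R m k : Type*} [CommSemiring R] [Fintype m]
    [Fintype k] (A : Matrix k m R) (η : Matrix k k R) (x y : m → R) :
    x ⬝ᵥ ((Aᵀ * η * A) *ᵥ y) = (A *ᵥ x) ⬝ᵥ (η *ᵥ (A *ᵥ y)) := by
  rw [Matrix.mul_assoc, ← mulVec_mulVec, dotProduct_mulVec, vecMul_transpose, ← mulVec_mulVec]

theorem dotProduct_eq_inv_mulVec_dotProduct_mulVec {R m : Type*} [CommRing R] [Fintype m]
    [DecidableEq m] {g : Matrix m m R} (hg : g.IsSymm) (hdet : IsUnit g.det) (a x : m → R) :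
    a ⬝ᵥ x = (g⁻¹ *ᵥ a) ⬝ᵥ (g *ᵥ x) := by
  rw [dotProduct_mulVec, ← mulVec_transpose, hg.eq, mulVec_mulVec, mul_nonsing_inv _ hdet,
    one_mulVec]

theorem isUnit_det_transpose_mul_diagonal_mul {R m : Type*} [CommRing R] [Fintype m]
    [DecidableEq m] {A : Matrix m m R} {d : m → R} (hA : IsUnit A.det) (hd : ∀ i, IsUnit (d i)) :
    IsUnit (Aᵀ * diagonal d * A).det := by
  rw [det_mul, det_mul, det_transpose, det_diagonal]
  exact (hA.mul (IsUnit.prod_univ_iff.mpr hd)).mul hA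

/-- Pointwise form of Theorem 2.1 (black-hole case): if `ξ` is a null covector for
the inverse Lorentzian metric `G = g⁻¹` with `(G ξ)₀ < 0` (the smaller-root
condition), then `ξ` pairs nonpositively with every forward timelike vector. -/
theorem black_hole_conormal_pairing_nonpos (n : ℕ)
    (A g G : Matrix (Fin (n + 1)) (Fin (n + 1)) ℝ)
    (hA : IsUnit A.det)
    (hg : g = A.transpose *
      Matrix.diagonal (fun i : Fin (n + 1) => if i = 0 then (1 : ℝ) else -1) * A)
    (hG : G = g⁻¹)
    (hG00 : 0 < G 0 0)
    (ξ : Fin (n + 1) → ℝ)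
    (hnull : dotProduct ξ (G.mulVec ξ) = 0)
    (hroot : G.mulVec ξ 0 < 0) :
    ∀ xdot : Fin (n + 1) → ℝ,
      0 < dotProduct xdot (g.mulVec xdot) → 0 < xdot 0 →
      ∑ j : Fin (n + 1), ξ j * xdot j ≤ 0 := by
  intro xdot htime hx0
  have hsymm : g.IsSymm := by
    rw [IsSymm, hg, transpose_mul, transpose_mul, diagonal_transpose, transpose_transpose,
      Matrix.mul_assoc]
  have hdet : IsUnit g.det :=
    hg ▸ isUnit_det_transpose_mul_diagonal_mul hA fun i => by split_ifs <;> simp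
  have hform : ∀ x y, x ⬝ᵥ g *ᵥ y = minkowskiInner (A *ᵥ x) (A *ᵥ y) := fun x y => by
    rw [hg, dotProduct_transpose_mul_mul_mulVec, dotProduct_minkowski_mulVec]
  have hraise : ∀ a x, a ⬝ᵥ x = minkowskiInner (A *ᵥ (G *ᵥ a)) (A *ᵥ x) := fun a x => by
    rw [dotProduct_eq_inv_mulVec_dotProduct_mulVec hsymm hdet, ← hG, hform]
  change ξ ⬝ᵥ xdot ≤ 0
  rw [hraise]
  refine minkowskiInner_nonpos_of_causal (x := A *ᵥ (G *ᵥ Pi.single 0 1)) ?_ ?_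
    (hform xdot xdot ▸ htime.le) ?_ ?_
  · rw [← hraise, single_one_dotProduct, mulVec_single_one]
    exact hG00.le
  · rw [← hraise]
    exact hnull.ge
  · rwa [← hraise, single_one_dotProduct]
  · rwa [← hraise, single_one_dotProduct]
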